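/- Define Ŝ(q,p) implicitly by χ(p/2)·Û_ω(q+p,q) = Σ_{σ=±1} D_{σω}(p)·Ŝ_{σω,ω}(q+p,q), where Û_ω(q+p,q) = C_ω(q+p,q)·ĝ_ω(q+p)·ĝ_ω(q). Then under the π/2-rotation k ↦ k* = (−k¹, k⁰) the kernel satisfies Ŝ_{ω̄,ω}(k*, p*) = −ω·ω̄·Ŝ_{ω̄,ω}(k,p), and consequently Σ_{i,j} ∫ d²k/(2π)² Ŝ_{ω,ω}^{(i,j)}(k, −k) = 0. -/

import Mathlib

open MeasureTheory

/-- `D_ω(p) = p⁰ + i·ω·p¹`. -/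
noncomputable def Dfun (ω : ℝ) (p : ℝ × ℝ) : ℂ :=
  (p.1 : ℂ) + Complex.I * (ω : ℂ) * (p.2 : ℂ)

/-- The rotation of `ℝ²` by `π/2`: `k ↦ k* = (−k¹, k⁰)`. -/
def rotQ (k : ℝ × ℝ) : ℝ × ℝ := (-k.2, k.1)

/-- `C_ω(q,p) = [χ^{-1}(p)−1] D_ω(p) − [χ^{-1}(q)−1] D_ω(q)`, written with first
argument `q` and second argument `p`. -/
noncomputable def Cker (χ : ℝ × ℝ → ℝ) (ω : ℝ) (q p : ℝ × ℝ) : ℂ :=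
  (((χ p)⁻¹ - 1 : ℝ) : ℂ) * Dfun ω p - (((χ q)⁻¹ - 1 : ℝ) : ℂ) * Dfun ω q

/-- `ĝ_ω(q) = χ(q)/D_ω(q)`. -/
noncomputable def ghat (χ : ℝ × ℝ → ℝ) (ω : ℝ) (q : ℝ × ℝ) : ℂ :=
  ((χ q : ℝ) : ℂ) / Dfun ω q

/-- `Û_ω(q+p, q) = C_ω(q+p,q) ĝ_ω(q+p) ĝ_ω(q)`, with arguments `a = q+p`, `b = q`. -/
noncomputable def Uker (χ : ℝ × ℝ → ℝ) (ω : ℝ) (a b : ℝ × ℝ) : ℂ :=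
  Cker χ ω a b * ghat χ ω a * ghat χ ω b

/-- The kernel `Ŝ_{ω̄,ω}(a,b)` solving the implicit decomposition
`χ(p/2)·Û_ω(q+p,q) = Σ_σ D_{σω}(p)·Ŝ_{σω,ω}(q+p,q)` with `p = a − b`. -/
noncomputable def Sker (χ : ℝ × ℝ → ℝ) (ωb ω : ℝ) (a b : ℝ × ℝ) : ℂ :=
  (starRingEnd ℂ) (Dfun ωb (a - b)) * ((χ ((1 / 2 : ℝ) • (a - b)) : ℝ) : ℂ) *
      Uker χ ω a b /
    (2 * (((a - b).1 ^ 2 + (a - b).2 ^ 2 : ℝ) : ℂ))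

/-!
With `ω² = 1` one has `D_ω(p) · conj D_ω(p) = |p|²`, so each of the two summands
`D_{σω}(p) Ŝ_{σω,ω}` equals `χ(p/2) Û_ω / 2`. Under the rotation `D_ω` picks up the factor
`iω`, hence so does `C_ω`, while `ĝ_ω` picks up `(iω)⁻¹ = -iω`; thus `Û_ω` picks up `-iω`
and `Ŝ_{ω̄,ω}` picks up `(-iω̄)(-iω) = -ω̄ω`. For `ω̄ = ω` the integrand `k ↦ Ŝ_{ω,ω}(k, -k)`
is therefore odd under a Lebesgue-measure-preserving map, so its integral vanishes.
-/

open Complex ComplexConjugate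

theorem integral_eq_zero_of_comp_eq_neg {α E : Type*} [MeasurableSpace α] [NormedAddCommGroup E]
    [NormedSpace ℝ E] {μ : Measure α} {e : α → α} (he : MeasurePreserving e μ μ)
    (he_emb : MeasurableEmbedding e) {f : α → E} (hf : ∀ x, f (e x) = -f x) :
    ∫ x, f x ∂μ = 0 := by
  have h := he.integral_comp he_emb f
  simp only [hf, integral_neg] at h
  have h2 : (2 : ℝ) • ∫ x, f x ∂μ = 0 := by
    rw [two_smul]; nth_rewrite 1 [← h]; exact neg_add_cancel _
  exact (smul_eq_zero.mp h2).resolve_left two_ne_zero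

theorem rotQ_sub (a b : ℝ × ℝ) : rotQ (a - b) = rotQ a - rotQ b := by
  simp only [rotQ, Prod.fst_sub, Prod.snd_sub, Prod.mk_sub_mk, neg_sub_neg, neg_sub]

theorem rotQ_neg (a : ℝ × ℝ) : rotQ (-a) = -rotQ a := rfl

theorem rotQ_smul (c : ℝ) (a : ℝ × ℝ) : rotQ (c • a) = c • rotQ a := by
  simp [rotQ]

theorem rotQ_eq_prodMap_neg_comp_swap : rotQ = Prod.map (fun x : ℝ => -x) id ∘ Prod.swap := rfl

theorem measurePreserving_rotQ : MeasurePreserving rotQ volume volume := by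
  rw [rotQ_eq_prodMap_neg_comp_swap, Measure.volume_eq_prod]
  exact ((Measure.measurePreserving_neg volume).prod (MeasurePreserving.id volume)).comp
    Measure.measurePreserving_swap

theorem measurableEmbedding_rotQ : MeasurableEmbedding rotQ :=
  (measurableEmbedding_neg.prodMap .id).comp MeasurableEquiv.prodComm.measurableEmbedding

theorem rotQ_fst_sq_add_snd_sq (p : ℝ × ℝ) :
    (rotQ p).1 ^ 2 + (rotQ p).2 ^ 2 = p.1 ^ 2 + p.2 ^ 2 := by
  simp only [rotQ, neg_sq]
  ring

theorem fst_sq_add_snd_sq_ne_zero {p : ℝ × ℝ} (hp : p ≠ 0) : p.1 ^ 2 + p.2 ^ 2 ≠ 0 := by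
  simp only [sq]
  exact fun h => hp (Prod.ext_iff.mpr (mul_self_add_mul_self_eq_zero.mp h))

section Kernels

variable {ω : ℝ}

theorem Dfun_mul_conj (hω : ω ^ 2 = 1) (p : ℝ × ℝ) :
    Dfun ω p * conj (Dfun ω p) = ((p.1 ^ 2 + p.2 ^ 2 : ℝ) : ℂ) := by
  have hω' : (ω : ℂ) ^ 2 = 1 := by exact_mod_cast hω
  simp only [Dfun, map_add, map_mul, conj_I, conj_ofReal]
  push_cast
  linear_combination (p.2 : ℂ) ^ 2 * hω' - (p.2 * ω : ℂ) ^ 2 * I_sq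

theorem Dfun_rotQ (hω : ω ^ 2 = 1) (p : ℝ × ℝ) :
    Dfun ω (rotQ p) = I * ω * Dfun ω p := by
  have hω' : (ω : ℂ) ^ 2 = 1 := by exact_mod_cast hω
  simp only [Dfun, rotQ]
  push_cast
  linear_combination (p.2 : ℂ) * hω' - (p.2 * ω ^ 2 : ℂ) * I_sq

theorem inv_I_mul_ofReal (hω : ω ^ 2 = 1) : (I * ω)⁻¹ = -(I * ω) := by
  have hω' : (ω : ℂ) ^ 2 = 1 := by exact_mod_cast hω
  refine inv_eq_of_mul_eq_one_right ?_
  linear_combination hω' - (ω : ℂ) ^ 2 * I_sq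

variable {χ : ℝ × ℝ → ℝ}

theorem ghat_rotQ (hrad : ∀ k, χ (rotQ k) = χ k) (hω : ω ^ 2 = 1) (q : ℝ × ℝ) :
    ghat χ ω (rotQ q) = -(I * ω) * ghat χ ω q := by
  rw [ghat, ghat, hrad, Dfun_rotQ hω, div_mul_eq_div_div_swap, div_eq_mul_inv _ (I * ω),
    inv_I_mul_ofReal hω, mul_comm]

theorem Cker_rotQ (hrad : ∀ k, χ (rotQ k) = χ k) (hω : ω ^ 2 = 1) (a b : ℝ × ℝ) :
    Cker χ ω (rotQ a) (rotQ b) = I * ω * Cker χ ω a b := by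
  rw [Cker, Cker, hrad, hrad, Dfun_rotQ hω, Dfun_rotQ hω]
  ring

theorem Uker_rotQ (hrad : ∀ k, χ (rotQ k) = χ k) (hω : ω ^ 2 = 1) (a b : ℝ × ℝ) :
    Uker χ ω (rotQ a) (rotQ b) = -(I * ω) * Uker χ ω a b := by
  have hω' : (ω : ℂ) ^ 2 = 1 := by exact_mod_cast hω
  rw [Uker, Uker, Cker_rotQ hrad hω, ghat_rotQ hrad hω, ghat_rotQ hrad hω]
  linear_combination
    (I * ω * Cker χ ω a b * ghat χ ω a * ghat χ ω b) * ((ω : ℂ) ^ 2 * I_sq - hω')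

theorem Sker_rotQ {ωb : ℝ} (hrad : ∀ k, χ (rotQ k) = χ k) (hω : ω ^ 2 = 1) (hωb : ωb ^ 2 = 1)
    (a b : ℝ × ℝ) :
    Sker χ ωb ω (rotQ a) (rotQ b) = -((ωb : ℂ) * ω) * Sker χ ωb ω a b := by
  rw [Sker, Sker, ← rotQ_sub, Dfun_rotQ hωb, ← rotQ_smul, hrad, Uker_rotQ hrad hω,
    rotQ_fst_sq_add_snd_sq, map_mul, map_mul, conj_I, conj_ofReal]
  linear_combination (ωb * ω * conj (Dfun ωb (a - b)) * (χ ((1 / 2 : ℝ) • (a - b)) : ℂ) *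
    Uker χ ω a b / (2 * (((a - b).1 ^ 2 + (a - b).2 ^ 2 : ℝ) : ℂ))) * I_sq

theorem Dfun_mul_Sker {ωb : ℝ} (hωb : ωb ^ 2 = 1) {a b : ℝ × ℝ} (hab : a - b ≠ 0) :
    Dfun ωb (a - b) * Sker χ ωb ω a b =
      (χ ((1 / 2 : ℝ) • (a - b)) : ℂ) * Uker χ ω a b / 2 := by
  have hN : (((a - b).1 ^ 2 + (a - b).2 ^ 2 : ℝ) : ℂ) ≠ 0 :=
    ofReal_ne_zero.mpr (fst_sq_add_snd_sq_ne_zero hab)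
  rw [Sker, ← mul_div_assoc, ← mul_assoc, ← mul_assoc, Dfun_mul_conj hωb]
  field_simp

end Kernels

/-- For a radial cutoff `χ`: the kernel `Ŝ` solves the implicit decomposition of
`χ(p/2)Û_ω`, it is odd of type `Ŝ_{ω̄,ω}(k*,p*) = −ωω̄ Ŝ_{ω̄,ω}(k,p)` under the `π/2`
rotation, and consequently the same-chirality anomaly contribution vanishes:
`∫ d²k Ŝ_{ω,ω}(k, −k) = 0`. -/
theorem stmt13 (χ : ℝ × ℝ → ℝ) (hrad : ∀ k, χ (rotQ k) = χ k)
    (ω : ℝ) (hω : ω = 1 ∨ ω = -1) :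
    (∀ a b : ℝ × ℝ, a - b ≠ 0 →
      ((χ ((1 / 2 : ℝ) • (a - b)) : ℝ) : ℂ) * Uker χ ω a b
        = ∑ s ∈ ({1, -1} : Finset ℝ), Dfun (s * ω) (a - b) * Sker χ (s * ω) ω a b) ∧
    (∀ ωb : ℝ, ωb = 1 ∨ ωb = -1 → ∀ a b : ℝ × ℝ,
      Sker χ ωb ω (rotQ a) (rotQ b) = -((ωb : ℂ) * (ω : ℂ)) * Sker χ ωb ω a b) ∧
    (∫ k : ℝ × ℝ, Sker χ ω ω k (-k)) = 0 := by
  have hω2 : ω ^ 2 = 1 := sq_eq_one_iff.mpr hω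
  refine ⟨fun a b hab => ?_,
    fun ωb hωb a b => Sker_rotQ hrad hω2 (sq_eq_one_iff.mpr hωb) a b, ?_⟩
  · rw [Finset.sum_pair (by norm_num), Dfun_mul_Sker (by rwa [one_mul]) hab,
      Dfun_mul_Sker (by rwa [neg_one_mul, neg_sq]) hab]
    ring
  · refine integral_eq_zero_of_comp_eq_neg measurePreserving_rotQ measurableEmbedding_rotQ
      fun k => ?_
    rw [← rotQ_neg, Sker_rotQ hrad hω2 hω2, ← ofReal_mul, ← sq, hω2, ofReal_one, neg_one_mul]
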